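/- Let n ≥ 1 be an odd natural number, Ω > 0, ζ₀ > 0, and define W(x₁, x₂, ζ) = ( Ω·(x₁ + Ω^{−1/n})ⁿ − 1 )·x₂ + (n+1)·x₂²/ζ. Then for every solution x = (x₁, x₂) : [ζ₀, ∞) → ℝ² of the shifted odd system, the function ζ ↦ W(x₁(ζ), x₂(ζ), ζ) is differentiable with derivative equal to (1/(n+1))·( Ω·(x₁(ζ) + Ω^{−1/n})ⁿ − 1 )² + x₂(ζ)²·( n·Ω·(x₁(ζ) + Ω^{−1/n})^{n−1} − 5(n+1)/ζ² ). -/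

import Mathlib

/-- A solution on [ζ₀, ∞) of the shifted odd system arising from the
generalized Lane–Emden equation with γ = 1 + 1/n: x₁′ = x₂,
x₂′ = (1/(n+1))·(Ω·(x₁ + Ω^{−1/n})ⁿ − 1) − 2x₂/ζ. -/
def IsSolShiftedOdd (n : ℕ) (Ω ζ₀ : ℝ) (x₁ x₂ : ℝ → ℝ) : Prop :=
  ∀ ζ ∈ Set.Ici ζ₀,
    HasDerivWithinAt x₁ (x₂ ζ) (Set.Ici ζ₀) ζ ∧
    HasDerivWithinAt x₂
      ((1 / ((n : ℝ) + 1)) * (Ω * (x₁ ζ + Ω ^ (-1 / (n : ℝ))) ^ n - 1)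
        - 2 * x₂ ζ / ζ)
      (Set.Ici ζ₀) ζ

/-- The instability Chetaev-type function
W(x₁,x₂,ζ) = (Ω(x₁ + Ω^{−1/n})ⁿ − 1)x₂ + (n+1)x₂²/ζ. -/
noncomputable def chetaevW (n : ℕ) (Ω : ℝ) (x₁ x₂ ζ : ℝ) : ℝ :=
  (Ω * (x₁ + Ω ^ (-1 / (n : ℝ))) ^ n - 1) * x₂ + ((n : ℝ) + 1) * x₂ ^ 2 / ζ

/-!
Differentiate `W` along the curve by the product, power and quotient rules and substitute the
system. With `F = Ω(x₁ + Ω^{−1/n})ⁿ − 1`, the damping term `−2x₂/ζ` contributes `−2F x₂/ζ` through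
the first summand of `W` and `+2F x₂/ζ` through the second, so the mixed terms cancel and only
`F²/(n+1)` and a multiple of `x₂²` survive.
-/

theorem hasDerivWithinAt_chetaevW {n : ℕ} {Ω : ℝ} {x₁ x₂ : ℝ → ℝ} {v₁ v₂ ζ : ℝ} {s : Set ℝ}
    (h₁ : HasDerivWithinAt x₁ v₁ s ζ) (h₂ : HasDerivWithinAt x₂ v₂ s ζ) (hζ : ζ ≠ 0) :
    HasDerivWithinAt (fun t => chetaevW n Ω (x₁ t) (x₂ t) t)
      (Ω * ((n : ℝ) * (x₁ ζ + Ω ^ (-1 / (n : ℝ))) ^ (n - 1) * v₁) * x₂ ζ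
        + (Ω * (x₁ ζ + Ω ^ (-1 / (n : ℝ))) ^ n - 1) * v₂
        + (((n : ℝ) + 1) * (2 * x₂ ζ ^ 1 * v₂) * ζ - ((n : ℝ) + 1) * x₂ ζ ^ 2 * 1) / ζ ^ 2)
      s ζ :=
  (((((h₁.add_const _).pow n).const_mul Ω).sub_const 1).mul h₂).add
    (((h₂.pow 2).const_mul _).div (hasDerivWithinAt_id ζ s) hζ)

theorem chetaev_derivative_identity {m F y ζ : ℝ} (P : ℝ) (hm : m ≠ 0) (hζ : ζ ≠ 0) :
    P * y * y + F * (1 / m * F - 2 * y / ζ) + (m * (2 * y ^ 1 * (1 / m * F - 2 * y / ζ)) * ζ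
        - m * y ^ 2 * 1) / ζ ^ 2
      = 1 / m * F ^ 2 + y ^ 2 * (P - 5 * m / ζ ^ 2) := by
  field_simp
  ring

theorem laneEmden_chetaev_derivative_general
    (n : ℕ) (Ω ζ₀ : ℝ) (hζ₀ : 0 < ζ₀)
    (x₁ x₂ : ℝ → ℝ) (hx : IsSolShiftedOdd n Ω ζ₀ x₁ x₂) :
    ∀ ζ ∈ Set.Ici ζ₀,
      HasDerivWithinAt (fun s : ℝ => chetaevW n Ω (x₁ s) (x₂ s) s)
        ((1 / ((n : ℝ) + 1)) * (Ω * (x₁ ζ + Ω ^ (-1 / (n : ℝ))) ^ n - 1) ^ 2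
          + x₂ ζ ^ 2 * ((n : ℝ) * Ω * (x₁ ζ + Ω ^ (-1 / (n : ℝ))) ^ (n - 1)
              - 5 * ((n : ℝ) + 1) / ζ ^ 2))
        (Set.Ici ζ₀) ζ := by
  intro ζ hζ
  have hζ_ne : ζ ≠ 0 := (hζ₀.trans_le hζ).ne'
  obtain ⟨h₁, h₂⟩ := hx ζ hζ
  convert hasDerivWithinAt_chetaevW h₁ h₂ hζ_ne using 1
  rw [← chetaev_derivative_identity _ (by positivity) hζ_ne]
  ring

/-- Along any solution of the shifted odd system, the function
ζ ↦ W(x₁(ζ), x₂(ζ), ζ) is differentiable with derivative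
(1/(n+1))(Ω(x₁ + Ω^{−1/n})ⁿ − 1)² + x₂²(nΩ(x₁ + Ω^{−1/n})^{n−1} − 5(n+1)/ζ²). -/
theorem laneEmden_chetaev_derivative
    (n : ℕ) (hn : 1 ≤ n) (hno : Odd n) (Ω ζ₀ : ℝ) (hΩ : 0 < Ω) (hζ₀ : 0 < ζ₀)
    (x₁ x₂ : ℝ → ℝ) (hx : IsSolShiftedOdd n Ω ζ₀ x₁ x₂) :
    ∀ ζ ∈ Set.Ici ζ₀,
      HasDerivWithinAt (fun s : ℝ => chetaevW n Ω (x₁ s) (x₂ s) s)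
        ((1 / ((n : ℝ) + 1)) * (Ω * (x₁ ζ + Ω ^ (-1 / (n : ℝ))) ^ n - 1) ^ 2
          + x₂ ζ ^ 2 * ((n : ℝ) * Ω * (x₁ ζ + Ω ^ (-1 / (n : ℝ))) ^ (n - 1)
              - 5 * ((n : ℝ) + 1) / ζ ^ 2))
        (Set.Ici ζ₀) ζ :=
  laneEmden_chetaev_derivative_general n Ω ζ₀ hζ₀ x₁ x₂ hx
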